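/- Let 𝓗 = {z ∈ R^d : A_H^T z ≤ b_H} be a nonempty polyhedron and let z*_H be the minimal 2-norm optimizer of max{c^T z : z ∈ 𝓗} (assumed to have finite optimal value). Then there exists ε̄ > 0 such that for every ε ∈ [0, ε̄], z*_H is the unique maximizer over 𝓗 of the perturbed objective J_ε(z) = c^T z − (ε/2)‖z‖², i.e., J_ε(z*_H) ≥ J_ε(z) for all z ∈ 𝓗 with equality only at z = z*_H when ε > 0. -/

import Mathlib

/-!
Along a feasible direction `x` at `z*` (one with `⟪A j, x⟫ ≤ 0` for every active constraint `j`),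
optimality of `z*` gives `⟪c, x⟫ ≤ 0`, and if `⟪c, x⟫ = 0` then `z* + t x` is still optimal for
small `t > 0`, so minimality of `‖z*‖` gives `⟪z*, x⟫ ≥ 0`. By Farkas' lemma, `-z*` is then a
nonnegative combination of `-c` and the active normals `A j`, say `z* = L c - ∑ μⱼ A j`, whence
`⟪z*, z* - z⟫ ≤ L ⟪c, z* - z⟫` on `𝓗`. For `ε L ≤ 1` this gives `⟪c - ε z*, z* - z⟫ ≥ 0`, and
`J_ε(z*) - J_ε(z) = ⟪c - ε z*, z* - z⟫ + (ε/2) ‖z - z*‖²`.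

Farkas' lemma follows from the separation theorem for closed cones; finitely generated cones are
closed because, by Carathéodory's theorem, they are finite unions of cones over linearly
independent families.
-/

open scoped InnerProductSpace

namespace PointedCone

section Caratheodory

variable {𝕜 E : Type*} [Field 𝕜] [LinearOrder 𝕜] [IsStrictOrderedRing 𝕜]
  [AddCommGroup E] [Module 𝕜 E]

theorem mem_hull_finset_iff {s : Finset E} {x : E} :
    x ∈ hull 𝕜 (s : Set E) ↔ ∃ μ : E → 𝕜, (∀ y ∈ s, 0 ≤ μ y) ∧ ∑ y ∈ s, μ y • y = x := by
  constructor
  · intro hx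
    obtain ⟨f, -, rfl⟩ := Submodule.mem_span_finset.1 hx
    exact ⟨fun y => f y, fun y _ => (f y).2, by simp only [Nonneg.coe_smul]⟩
  · rintro ⟨μ, hμ, rfl⟩
    exact Submodule.sum_mem _ fun y hy => smul_mem _ (hμ y hy) (subset_hull hy)

theorem exists_mem_hull_erase [DecidableEq E] {s : Finset E} {μ g : E → 𝕜}
    (hμ : ∀ y ∈ s, 0 ≤ μ y) (hg : ∑ y ∈ s, g y • y = 0) (hpos : ∃ y ∈ s, 0 < g y) :
    ∃ y ∈ s, ∑ y ∈ s, μ y • y ∈ hull 𝕜 (s.erase y : Set E) := by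
  obtain ⟨y₁, hy₁, hmin⟩ := (s.filter (0 < g ·)).exists_min_image (fun y => μ y / g y)
    (by simpa [Finset.Nonempty] using hpos)
  rw [Finset.mem_filter] at hy₁
  set r := μ y₁ / g y₁
  have hr : 0 ≤ r := div_nonneg (hμ y₁ hy₁.1) hy₁.2.le
  refine ⟨y₁, hy₁.1, mem_hull_finset_iff.2 ⟨fun y => μ y - r * g y, fun y hy => ?_, ?_⟩⟩
  · have hys := Finset.mem_of_mem_erase hy
    rcases le_or_gt (g y) 0 with hgy | hgy
    · nlinarith [hμ y hys]
    · have := hmin y (Finset.mem_filter.2 ⟨hys, hgy⟩)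
      rw [le_div_iff₀ hgy] at this
      linarith
  · rw [Finset.sum_erase _ (by simp [r, hy₁.2.ne'])]
    simp only [sub_smul, mul_smul, Finset.sum_sub_distrib, ← Finset.smul_sum, hg, smul_zero,
      sub_zero]

/-- Carathéodory's theorem for cones. -/
theorem exists_linearIndepOn_mem_hull (s : Finset E) {x : E} (hx : x ∈ hull 𝕜 (s : Set E)) :
    ∃ t ⊆ s, LinearIndepOn 𝕜 id (t : Set E) ∧ x ∈ hull 𝕜 (t : Set E) := by
  classical
  induction s using Finset.strongInduction generalizing x with
  | _ s ih =>
  by_cases hs : LinearIndepOn 𝕜 id (s : Set E)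
  · exact ⟨s, subset_rfl, hs, hx⟩
  obtain ⟨μ, hμ, rfl⟩ := mem_hull_finset_iff.1 hx
  obtain ⟨g, hg, hpos⟩ : ∃ g : E → 𝕜, ∑ y ∈ s, g y • y = 0 ∧ ∃ y ∈ s, 0 < g y := by
    simp only [linearIndepOn_finset_iff, id, not_forall] at hs
    obtain ⟨g, hg, y, hy, hgy⟩ := hs
    rcases lt_or_gt_of_ne hgy with hneg | hpos
    · exact ⟨-g, by simp [neg_smul, hg], y, hy, by simpa using hneg⟩
    · exact ⟨g, hg, y, hy, hpos⟩
  obtain ⟨y, hy, hmem⟩ := exists_mem_hull_erase hμ hg hpos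
  obtain ⟨t, hts, ht, hxt⟩ := ih _ (Finset.erase_ssubset hy) hmem
  exact ⟨t, hts.trans (Finset.erase_subset _ _), ht, hxt⟩

end Caratheodory

section Topology

variable {E : Type*} [AddCommGroup E] [Module ℝ E] [TopologicalSpace E] [IsTopologicalAddGroup E]
  [ContinuousSMul ℝ E] [T2Space E]

theorem isClosed_hull_of_linearIndepOn {t : Finset E} (ht : LinearIndepOn ℝ id (t : Set E)) :
    IsClosed (hull ℝ (t : Set E) : Set E) := by
  have himage : (hull ℝ (t : Set E) : Set E) =
      Fintype.linearCombination ℝ (Subtype.val : t → E) '' Set.Ici 0 := by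
    ext x
    simp only [SetLike.mem_coe, Submodule.mem_span_finset', Set.mem_image, Set.mem_Ici,
      Fintype.linearCombination_apply]
    constructor
    · rintro ⟨f, rfl⟩
      exact ⟨fun a => f a, fun a => (f a).2, by simp only [Nonneg.coe_smul]⟩
    · rintro ⟨f, hf, rfl⟩
      exact ⟨fun a => ⟨f a, hf a⟩, by simp only [← Nonneg.coe_smul]⟩
  rw [himage]
  exact (LinearMap.isClosedEmbedding_of_injective (LinearMap.ker_eq_bot.2
    ht.fintypeLinearCombination_injective)).isClosedMap _ isClosed_Ici

theorem _root_.Set.Finite.isClosed_hull {s : Set E} (hs : s.Finite) :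
    IsClosed (hull ℝ s : Set E) := by
  classical
  obtain ⟨s, rfl⟩ := hs.exists_finset_coe
  have hunion : (hull ℝ (s : Set E) : Set E) =
      ⋃ t ∈ s.powerset.filter fun t : Finset E => LinearIndepOn ℝ id (t : Set E),
        (hull ℝ (t : Set E) : Set E) := by
    ext x
    simp only [SetLike.mem_coe, Set.mem_iUnion, Finset.mem_filter, Finset.mem_powerset,
      exists_prop]
    constructor
    · intro hx
      obtain ⟨t, hts, ht, hxt⟩ := exists_linearIndepOn_mem_hull s hx
      exact ⟨t, ⟨hts, ht⟩, hxt⟩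
    · rintro ⟨t, ⟨hts, -⟩, hxt⟩
      exact Submodule.span_mono (by exact_mod_cast hts) hxt
  rw [hunion]
  exact isClosed_biUnion_finset fun t ht =>
    isClosed_hull_of_linearIndepOn (Finset.mem_filter.1 ht).2

end Topology

/-- **Farkas' lemma** for finitely generated cones. -/
theorem mem_hull_of_forall_inner_nonpos {E : Type*} [NormedAddCommGroup E] [InnerProductSpace ℝ E]
    [CompleteSpace E] {s : Set E} (hs : s.Finite) {w : E}
    (h : ∀ x, (∀ y ∈ s, ⟪y, x⟫_ℝ ≤ 0) → ⟪w, x⟫_ℝ ≤ 0) : w ∈ hull ℝ s := by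
  by_contra hw
  obtain ⟨x, hx, hwx⟩ := ProperCone.hyperplane_separation' ⟨hull ℝ s, hs.isClosed_hull⟩ hw
  have := h (-x) fun y hy => by
    simpa [inner_neg_right] using hx y (subset_hull hy)
  rw [inner_neg_right] at this
  linarith

end PointedCone

section Polyhedron

open Filter Topology

variable {E ι : Type*} [NormedAddCommGroup E] [InnerProductSpace ℝ E] [Finite ι]

def polyhedron (A : ι → E) (b : ι → ℝ) : Set E := {z | ∀ j, ⟪A j, z⟫_ℝ ≤ b j}

variable {A : ι → E} {b : ι → ℝ} {c z x : E}

theorem eventually_add_smul_mem_polyhedron (hz : z ∈ polyhedron A b)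
    (hx : ∀ j, ⟪A j, z⟫_ℝ = b j → ⟪A j, x⟫_ℝ ≤ 0) :
    ∀ᶠ t in 𝓝[>] (0 : ℝ), z + t • x ∈ polyhedron A b := by
  refine eventually_all.2 fun j => ?_
  simp only [inner_add_right, real_inner_smul_right]
  rcases le_or_gt ⟪A j, x⟫_ℝ 0 with hxj | hxj
  · filter_upwards [self_mem_nhdsWithin] with t (ht : 0 < t)
    nlinarith [hz j]
  · have hlt : ⟪A j, z⟫_ℝ < b j := (hz j).lt_of_ne fun h => (hx j h).not_gt hxj
    have hlim : Tendsto (fun t : ℝ => ⟪A j, z⟫_ℝ + t * ⟪A j, x⟫_ℝ) (𝓝[>] 0) (𝓝 ⟪A j, z⟫_ℝ) :=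
      ((by fun_prop : Continuous fun t : ℝ => ⟪A j, z⟫_ℝ + t * ⟪A j, x⟫_ℝ).tendsto' 0 _
        (by simp)).mono_left nhdsWithin_le_nhds
    exact (hlim.eventually_lt_const hlt).mono fun t => le_of_lt

theorem inner_nonpos_of_isMaxOn (hz : z ∈ polyhedron A b)
    (hmax : IsMaxOn (⟪c, ·⟫_ℝ) (polyhedron A b) z)
    (hx : ∀ j, ⟪A j, z⟫_ℝ = b j → ⟪A j, x⟫_ℝ ≤ 0) : ⟪c, x⟫_ℝ ≤ 0 := by
  obtain ⟨t, hmem, ht⟩ :=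
    ((eventually_add_smul_mem_polyhedron hz hx).and self_mem_nhdsWithin).exists
  have := isMaxOn_iff.1 hmax _ hmem
  rw [inner_add_right, real_inner_smul_right] at this
  nlinarith [show (0 : ℝ) < t from ht]

theorem inner_nonneg_of_isMinOn_norm (hz : z ∈ polyhedron A b)
    (hmax : IsMaxOn (⟪c, ·⟫_ℝ) (polyhedron A b) z)
    (hmin : IsMinOn (‖·‖) {w ∈ polyhedron A b | IsMaxOn (⟪c, ·⟫_ℝ) (polyhedron A b) w} z)
    (hx : ∀ j, ⟪A j, z⟫_ℝ = b j → ⟪A j, x⟫_ℝ ≤ 0) (hcx : 0 ≤ ⟪c, x⟫_ℝ) : 0 ≤ ⟪z, x⟫_ℝ := by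
  have hcx : ⟪c, x⟫_ℝ = 0 := le_antisymm (inner_nonpos_of_isMaxOn hz hmax hx) hcx
  by_contra! hzx
  have hsmall : ∀ᶠ t in 𝓝[>] (0 : ℝ), t * ‖x‖ ^ 2 < -(2 * ⟪z, x⟫_ℝ) := by
    have hlim : Tendsto (fun t : ℝ => t * ‖x‖ ^ 2) (𝓝[>] 0) (𝓝 0) :=
      ((by fun_prop : Continuous fun t : ℝ => t * ‖x‖ ^ 2).tendsto' 0 _
        (by simp)).mono_left nhdsWithin_le_nhds
    exact hlim.eventually_lt_const (by linarith)
  obtain ⟨t, ⟨hmem, hlt⟩, ht⟩ :=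
    (((eventually_add_smul_mem_polyhedron hz hx).and hsmall).and self_mem_nhdsWithin).exists
  have hopt : IsMaxOn (⟪c, ·⟫_ℝ) (polyhedron A b) (z + t • x) := by
    refine isMaxOn_iff.2 fun v hv => ?_
    rw [inner_add_right, real_inner_smul_right, hcx, mul_zero, add_zero]
    exact isMaxOn_iff.1 hmax v hv
  have hnorm : ‖z‖ ^ 2 ≤ ‖z + t • x‖ ^ 2 := by
    gcongr
    exact isMinOn_iff.1 hmin _ ⟨hmem, hopt⟩
  rw [norm_add_sq_real, real_inner_smul_right, norm_smul, mul_pow, Real.norm_eq_abs,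
    sq_abs] at hnorm
  nlinarith [mul_lt_mul_of_pos_left hlt (show (0 : ℝ) < t from ht)]

theorem exists_inner_le_mul_inner [FiniteDimensional ℝ E] (hz : z ∈ polyhedron A b)
    (hmax : IsMaxOn (⟪c, ·⟫_ℝ) (polyhedron A b) z)
    (hmin : IsMinOn (‖·‖) {w ∈ polyhedron A b | IsMaxOn (⟪c, ·⟫_ℝ) (polyhedron A b) w} z) :
    ∃ L ≥ (0 : ℝ), ∀ w ∈ polyhedron A b, ⟪z, z - w⟫_ℝ ≤ L * ⟪c, z - w⟫_ℝ := by
  set s : Set E := insert (-c) (A '' {j | ⟪A j, z⟫_ℝ = b j})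
  have hfarkas : -z ∈ PointedCone.hull ℝ s :=
    PointedCone.mem_hull_of_forall_inner_nonpos (((Set.toFinite _).image A).insert _)
      fun x hx => by
        simp only [Set.forall_mem_insert, Set.forall_mem_image, Set.mem_ofPred_eq,
          inner_neg_left, neg_nonpos] at hx ⊢
        exact inner_nonneg_of_isMinOn_norm hz hmax hmin hx.2 hx.1
  have hvalid : ∀ y ∈ PointedCone.hull ℝ s,
      ∃ L ≥ (0 : ℝ), ∀ w ∈ polyhedron A b, ⟪y, w - z⟫_ℝ ≤ L * ⟪c, z - w⟫_ℝ := by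
    intro y hy
    induction hy using Submodule.span_induction with
    | mem y hy =>
      rcases hy with rfl | ⟨j, hj, rfl⟩
      · exact ⟨1, zero_le_one, fun w _ => by rw [one_mul, inner_neg_left, ← inner_neg_right,
          neg_sub]⟩
      · refine ⟨0, le_rfl, fun w hw => ?_⟩
        rw [zero_mul, inner_sub_right, hj, sub_nonpos]
        exact hw j
    | zero => exact ⟨0, le_rfl, fun w _ => by simp⟩
    | add y₁ y₂ _ _ h₁ h₂ =>
      obtain ⟨L₁, hL₁, h₁⟩ := h₁
      obtain ⟨L₂, hL₂, h₂⟩ := h₂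
      refine ⟨L₁ + L₂, add_nonneg hL₁ hL₂, fun w hw => ?_⟩
      rw [inner_add_left, add_mul]
      exact add_le_add (h₁ w hw) (h₂ w hw)
    | smul a y _ h =>
      obtain ⟨L, hL, h⟩ := h
      refine ⟨a * L, mul_nonneg a.2 hL, fun w hw => ?_⟩
      rw [← Nonneg.coe_smul, real_inner_smul_left, mul_assoc]
      exact mul_le_mul_of_nonneg_left (h w hw) a.2
  obtain ⟨L, hL, h⟩ := hvalid (-z) hfarkas
  refine ⟨L, hL, fun w hw => ?_⟩
  simpa only [inner_neg_left, ← inner_neg_right, neg_sub] using h w hw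

theorem exists_pos_forall_add_norm_sub_sq_le [FiniteDimensional ℝ E]
    (hz : z ∈ polyhedron A b) (hmax : IsMaxOn (⟪c, ·⟫_ℝ) (polyhedron A b) z)
    (hmin : IsMinOn (‖·‖) {w ∈ polyhedron A b | IsMaxOn (⟪c, ·⟫_ℝ) (polyhedron A b) w} z) :
    ∃ εbar > (0 : ℝ), ∀ ε ∈ Set.Icc 0 εbar, ∀ w ∈ polyhedron A b,
      ⟪c, w⟫_ℝ - ε / 2 * ‖w‖ ^ 2 + ε / 2 * ‖w - z‖ ^ 2 ≤ ⟪c, z⟫_ℝ - ε / 2 * ‖z‖ ^ 2 := by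
  obtain ⟨L, hL, hzL⟩ := exists_inner_le_mul_inner hz hmax hmin
  refine ⟨1 / (L + 1), by positivity, fun ε ⟨hε, hεL⟩ w hw => ?_⟩
  have hεL : ε * L ≤ 1 := by
    rw [le_div_iff₀ (by positivity)] at hεL
    nlinarith
  have hcw : 0 ≤ ⟪c, z - w⟫_ℝ := by
    rw [inner_sub_right, sub_nonneg]
    exact isMaxOn_iff.1 hmax w hw
  have hexpand : ‖w‖ ^ 2 = ‖z‖ ^ 2 - 2 * ⟪z, z - w⟫_ℝ + ‖w - z‖ ^ 2 := by
    rw [norm_sub_sq_real, inner_sub_right, real_inner_self_eq_norm_sq, real_inner_comm]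
    ring
  have hkey : ε * ⟪z, z - w⟫_ℝ ≤ ⟪c, z⟫_ℝ - ⟪c, w⟫_ℝ := calc
    ε * ⟪z, z - w⟫_ℝ ≤ ε * (L * ⟪c, z - w⟫_ℝ) := mul_le_mul_of_nonneg_left (hzL w hw) hε
    _ = ε * L * ⟪c, z - w⟫_ℝ := by ring
    _ ≤ ⟪c, z - w⟫_ℝ := mul_le_of_le_one_left hcw hεL
    _ = ⟪c, z⟫_ℝ - ⟪c, w⟫_ℝ := inner_sub_right _ _ _
  rw [hexpand]
  linarith

end Polyhedron

theorem stmt_1_general (d m : ℕ) (A : Fin m → EuclideanSpace ℝ (Fin d)) (b : Fin m → ℝ)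
    (c : EuclideanSpace ℝ (Fin d))
    (H : Set (EuclideanSpace ℝ (Fin d)))
    (hH : H = {z | ∀ j : Fin m, ⟪A j, z⟫_ℝ ≤ b j})
    (Γ : Set (EuclideanSpace ℝ (Fin d)))
    (hΓ : Γ = {z ∈ H | ∀ v ∈ H, ⟪c, v⟫_ℝ ≤ ⟪c, z⟫_ℝ})
    (zstar : EuclideanSpace ℝ (Fin d))
    (hzΓ : zstar ∈ Γ)
    (hmin : ∀ z ∈ Γ, ‖zstar‖ ≤ ‖z‖)
    (J : ℝ → EuclideanSpace ℝ (Fin d) → ℝ)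
    (hJ : J = fun ε z => ⟪c, z⟫_ℝ - ε / 2 * ‖z‖ ^ 2) :
    ∃ εbar > (0:ℝ), ∀ ε ∈ Set.Icc (0:ℝ) εbar,
      (∀ z ∈ H, J ε z ≤ J ε zstar) ∧
      (0 < ε → ∀ z ∈ H, J ε z = J ε zstar → z = zstar) := by
  subst hH hΓ hJ
  obtain ⟨εbar, hεbar, hle⟩ := exists_pos_forall_add_norm_sub_sq_le (A := A) (b := b)
    hzΓ.1 (isMaxOn_iff.2 hzΓ.2) (isMinOn_iff.2 hmin)
  refine ⟨εbar, hεbar, fun ε hε => ⟨fun z hz => ?_, fun hεpos z hz heq => ?_⟩⟩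
  · have hgap := hle ε hε z hz
    have : 0 ≤ ε / 2 * ‖z - zstar‖ ^ 2 := by have := hε.1; positivity
    dsimp only
    linarith
  · have hgap := hle ε hε z hz
    dsimp only at heq
    have hsq : ‖z - zstar‖ ^ 2 ≤ 0 := by nlinarith
    simpa [sub_eq_zero] using hsq

/-- Quadratic-perturbation (Mangasarian-type) result: the minimal 2-norm optimizer of a
linear program over a polyhedron is, for all sufficiently small ε ≥ 0, the unique maximizer
of the perturbed objective `J_ε(z) = cᵀz - (ε/2)‖z‖²`. -/
theorem stmt_1 (d m : ℕ) (A : Fin m → EuclideanSpace ℝ (Fin d)) (b : Fin m → ℝ)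
    (c : EuclideanSpace ℝ (Fin d))
    (H : Set (EuclideanSpace ℝ (Fin d)))
    (hH : H = {z | ∀ j : Fin m, ⟪A j, z⟫_ℝ ≤ b j})
    (hne : H.Nonempty)
    (Γ : Set (EuclideanSpace ℝ (Fin d)))
    (hΓ : Γ = {z ∈ H | ∀ v ∈ H, ⟪c, v⟫_ℝ ≤ ⟪c, z⟫_ℝ})
    (zstar : EuclideanSpace ℝ (Fin d))
    (hzΓ : zstar ∈ Γ)
    (hmin : ∀ z ∈ Γ, ‖zstar‖ ≤ ‖z‖)
    (J : ℝ → EuclideanSpace ℝ (Fin d) → ℝ)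
    (hJ : J = fun ε z => ⟪c, z⟫_ℝ - ε / 2 * ‖z‖ ^ 2) :
    ∃ εbar > (0:ℝ), ∀ ε ∈ Set.Icc (0:ℝ) εbar,
      (∀ z ∈ H, J ε z ≤ J ε zstar) ∧
      (0 < ε → ∀ z ∈ H, J ε z = J ε zstar → z = zstar) :=
  stmt_1_general d m A b c H hH Γ hΓ zstar hzΓ hmin J hJ
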